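/- arXiv:2506.11379 — 2 statements merged into one kernel-verified Lean document; each statement's English description precedes it below -/
import Mathlib

section
/- Let {(σ_n, v_n, u_n)}_{n∈ℕ} be a singular system for the compact linear operator K : X → Y such that (u_n) spans the closure of the range of K and (v_n) spans the closure of the range of K*. Let δ > 0, E > 0, c > 0, d₁ > 0, d₂ > 0, and set α = c (δ/E)^{2/3}. Suppose x = K* z with ‖z‖ ≤ E, y^δ ∈ Y with ‖y^δ − K x‖ ≤ δ, that (d₁/α) σ_n ≥ 1 for every n with |σ_n ⟨y^δ, u_n⟩| > α/2 or |σ_n ⟨K x, u_n⟩| > α/2, and that σ_n ≤ √(d₂ α) for all n. Then the ℓ¹-SVD reconstruction x^{α,δ} := ∑_n (1/σ_n²) S_α(σ_n ⟨y^δ, u_n⟩) v_n satisfies ‖x^{α,δ} − x‖ ≤ (d₁/c + √(d₂ c)) δ^{1/3} E^{2/3}. -/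
/-
Write `aₙ = σₙ⟪y^δ, uₙ⟫` and `āₙ = σₙ⟪Kx, uₙ⟫ = σₙ³⟪z, uₙ⟫`, so that `x = ∑ σₙ⟪z, uₙ⟫ vₙ`. The
`n`-th coefficient of `x^{α,δ} - x` splits as `σₙ⁻²(S_α aₙ - S_α āₙ) + σₙ⁻²(S_α āₙ - āₙ)`. The
first term vanishes unless `aₙ` or `āₙ` exceeds the threshold, and there `σₙ⁻¹ ≤ d₁/α`, so since
`S_α` is 1-Lipschitz it is at most `(d₁/α)|⟪uₙ, y^δ - Kx⟫|`. As `|S_α t - t| ≤ |t|`, the second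
is at most `σₙ|⟪uₙ, z⟫| ≤ √(d₂α)|⟪uₙ, z⟫|`. Bessel's inequality then gives
`‖x^{α,δ} - x‖ ≤ (d₁/α)δ + √(d₂α)E`, and the choice of `α` balances the two terms.
-/

open scoped InnerProductSpace

noncomputable def softThresh (α t : ℝ) : ℝ :=
  if t ≤ -(α / 2) then t + α / 2
  else if α / 2 ≤ t then t - α / 2
  else 0

open Submodule Set

lemma softThresh_eq_zero {α t : ℝ} (h : |t| ≤ α / 2) : softThresh α t = 0 := by
  rw [abs_le] at h
  unfold softThresh
  split_ifs <;> linarith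

lemma abs_softThresh_sub_self_le {α : ℝ} (hα : 0 ≤ α) (t : ℝ) : |softThresh α t - t| ≤ |t| := by
  have := le_abs_self t
  have := neg_abs_le t
  unfold softThresh
  split_ifs <;> rw [abs_le] <;> constructor <;> linarith

lemma abs_softThresh_sub_softThresh_le {α : ℝ} (hα : 0 ≤ α) (s t : ℝ) :
    |softThresh α s - softThresh α t| ≤ |s - t| := by
  have := le_abs_self (s - t)
  have := neg_abs_le (s - t)
  unfold softThresh
  split_ifs <;> rw [abs_le] <;> constructor <;> linarith

lemma abs_inv_sq_mul_softThresh_sub_softThresh_le {α σ κ s t : ℝ} (hα : 0 ≤ α) (hσ : 0 < σ)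
    (hκ : 0 ≤ κ) (hlarge : α / 2 < |σ * s| ∨ α / 2 < |σ * t| → 1 ≤ κ * σ) :
    |(σ ^ 2)⁻¹ * (softThresh α (σ * s) - softThresh α (σ * t))| ≤ κ * |s - t| := by
  by_cases h : α / 2 < |σ * s| ∨ α / 2 < |σ * t|
  · calc |(σ ^ 2)⁻¹ * (softThresh α (σ * s) - softThresh α (σ * t))|
        ≤ (σ ^ 2)⁻¹ * |σ * s - σ * t| := by
          rw [abs_mul, abs_of_pos (a := (σ ^ 2)⁻¹) (by positivity)]
          exact mul_le_mul_of_nonneg_left (abs_softThresh_sub_softThresh_le hα _ _) (by positivity)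
      _ = σ⁻¹ * |s - t| := by
          rw [← mul_sub, abs_mul, abs_of_pos hσ]
          field_simp
      _ ≤ κ * |s - t| := by
          gcongr
          exact (inv_le_iff_one_le_mul₀ hσ).2 (hlarge h)
  · push Not at h
    rw [softThresh_eq_zero h.1, softThresh_eq_zero h.2, sub_self, mul_zero, abs_zero]
    positivity

lemma abs_inv_sq_mul_softThresh_sub_self_le {α σ β : ℝ} (hα : 0 ≤ α) (hσ : 0 < σ) (hσβ : σ ≤ β)
    (ζ : ℝ) : |(σ ^ 2)⁻¹ * (softThresh α (σ * (σ ^ 2 * ζ)) - σ * (σ ^ 2 * ζ))| ≤ β * |ζ| :=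
  calc |(σ ^ 2)⁻¹ * (softThresh α (σ * (σ ^ 2 * ζ)) - σ * (σ ^ 2 * ζ))|
      ≤ (σ ^ 2)⁻¹ * |σ * (σ ^ 2 * ζ)| := by
        rw [abs_mul, abs_of_pos (a := (σ ^ 2)⁻¹) (by positivity)]
        exact mul_le_mul_of_nonneg_left (abs_softThresh_sub_self_le hα _) (by positivity)
    _ = σ * |ζ| := by
        rw [abs_mul, abs_mul, abs_of_pos hσ, abs_of_pos (by positivity)]
        field_simp
    _ ≤ β * |ζ| := by gcongr

lemma div_mul_add_sqrt_mul_mul_eq {δ E c d₁ d₂ : ℝ} (hδ : 0 < δ) (hE : 0 < E) :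
    d₁ / (c * (δ / E) ^ ((2 : ℝ) / 3)) * δ + √(d₂ * (c * (δ / E) ^ ((2 : ℝ) / 3))) * E
      = (d₁ / c + √(d₂ * c)) * δ ^ ((1 : ℝ) / 3) * E ^ ((2 : ℝ) / 3) := by
  have cube_rpow : ∀ {t : ℝ}, 0 < t → ∀ k : ℕ, (t ^ 3) ^ ((k : ℝ) / 3) = t ^ k := fun {t} ht k => by
    rw [← Real.rpow_natCast t 3, ← Real.rpow_mul ht.le, ← Real.rpow_natCast]
    congr 1
    push_cast
    field_simp
  -- with `δ = a³` and `E = b³` all the powers become integral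
  obtain ⟨a, ha, rfl⟩ : ∃ a, 0 < a ∧ δ = a ^ 3 := ⟨δ ^ ((1 : ℝ) / 3), by positivity, by
    rw [← Real.rpow_natCast, ← Real.rpow_mul hδ.le]; norm_num⟩
  obtain ⟨b, hb, rfl⟩ : ∃ b, 0 < b ∧ E = b ^ 3 := ⟨E ^ ((1 : ℝ) / 3), by positivity, by
    rw [← Real.rpow_natCast, ← Real.rpow_mul hE.le]; norm_num⟩
  have ha13 : (a ^ 3) ^ ((1 : ℝ) / 3) = a := by simpa using cube_rpow ha 1
  have hb23 : (b ^ 3) ^ ((2 : ℝ) / 3) = b ^ 2 := by exact_mod_cast cube_rpow hb 2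
  have hab23 : ((a / b) ^ 3) ^ ((2 : ℝ) / 3) = (a / b) ^ 2 := by
    exact_mod_cast cube_rpow (div_pos ha hb) 2
  rw [← div_pow, hab23, ha13, hb23, ← mul_assoc, Real.sqrt_mul' _ (sq_nonneg _),
    Real.sqrt_sq (by positivity)]
  field_simp

section Hilbert

variable {ι X Y : Type*} [NormedAddCommGroup X] [InnerProductSpace ℝ X]
  [NormedAddCommGroup Y] [InnerProductSpace ℝ Y] {v : ι → X} {u : ι → Y}

theorem Orthonormal.inner_left_of_hasSum (hv : Orthonormal ℝ v) {f : ι → ℝ} {s : X}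
    (hs : HasSum (fun i => f i • v i) s) (i : ι) : ⟪v i, s⟫_ℝ = f i := by
  have hsingle := hasSum_single (f := fun j => ⟪v i, f j • v j⟫_ℝ) i fun j hj => by
    simp [real_inner_smul_right, hv.2 hj.symm]
  simpa [real_inner_smul_right, real_inner_self_eq_norm_sq, hv.1 i] using
    (hs.mapL (innerSL ℝ (v i))).unique hsingle

theorem Orthonormal.summable_smul_of_abs_le_inner [CompleteSpace X] (hv : Orthonormal ℝ v)
    (hu : Orthonormal ℝ u) {f : ι → ℝ} {A : ℝ} {w : Y} (hf : ∀ i, |f i| ≤ A * |⟪u i, w⟫_ℝ|) :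
    Summable fun i => f i • v i := by
  have := (hv.orthogonalFamily.summable_iff_norm_sq_summable f).2 <|
    ((hu.inner_products_summable w).mul_left (A ^ 2)).of_nonneg_of_le (fun i => sq_nonneg _)
      fun i => by simpa [mul_pow] using pow_le_pow_left₀ (abs_nonneg _) (hf i) 2
  simpa [LinearIsometry.toSpanSingleton_apply] using this

theorem Orthonormal.norm_tsum_smul_le_of_abs_le_inner [CompleteSpace X] (hv : Orthonormal ℝ v)
    (hu : Orthonormal ℝ u) {f : ι → ℝ} {A : ℝ} {w : Y} (hA : 0 ≤ A)
    (hf : ∀ i, |f i| ≤ A * |⟪u i, w⟫_ℝ|) : ‖∑' i, f i • v i‖ ≤ A * ‖w‖ := by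
  refine le_of_tendsto' (hv.summable_smul_of_abs_le_inner hu hf).hasSum.norm fun t => ?_
  rw [← pow_le_pow_iff_left₀ (norm_nonneg _) (by positivity) two_ne_zero,
    ← real_inner_self_eq_norm_sq, hv.inner_sum, mul_pow]
  calc ∑ i ∈ t, f i * f i ≤ ∑ i ∈ t, A ^ 2 * ‖⟪u i, w⟫_ℝ‖ ^ 2 := by
        refine Finset.sum_le_sum fun i _ => ?_
        simpa [mul_pow, ← sq] using pow_le_pow_left₀ (abs_nonneg _) (hf i) 2
    _ ≤ A ^ 2 * ‖w‖ ^ 2 := by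
        rw [← Finset.mul_sum]
        exact mul_le_mul_of_nonneg_left (hu.sum_inner_products_le w) (sq_nonneg A)

theorem Orthonormal.hasSum_inner_smul_of_mem_closure_span [CompleteSpace X]
    (hv : Orthonormal ℝ v) {x : X} (hx : x ∈ (span ℝ (range v)).topologicalClosure) :
    HasSum (fun i => ⟪v i, x⟫_ℝ • v i) x := by
  set V := span ℝ (range v)
  obtain ⟨s, hs⟩ := hv.summable_smul_of_abs_le_inner hv (f := fun i => ⟪v i, x⟫_ℝ) (A := 1)
    fun i => by rw [one_mul]
  suffices x - s = 0 by rwa [← sub_eq_zero.1 this] at hs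
  have hsV : s ∈ V.topologicalClosure := hs.tsum_eq ▸ tsum_mem V.isClosed_topologicalClosure
    fun i => V.le_topologicalClosure (V.smul_mem _ (subset_span ⟨i, rfl⟩))
  have hortho : V ⟂ ℝ ∙ (x - s) := by
    refine isOrtho_span.2 ?_
    rintro _ ⟨i, rfl⟩ _ rfl
    rw [inner_sub_right, hv.inner_left_of_hasSum hs i, sub_self]
  have hperp : x - s ∈ V.topologicalClosureᗮ := by
    rw [orthogonal_closure]
    exact hortho.symm.le (mem_span_singleton_self _)
  simpa using (V.topologicalClosure.inf_orthogonal_eq_bot).le ⟨sub_mem hx hsV, hperp⟩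

end Hilbert

section SingularSystem

variable {X Y : Type*} [NormedAddCommGroup X] [InnerProductSpace ℝ X] [CompleteSpace X]
  [NormedAddCommGroup Y] [InnerProductSpace ℝ Y] [CompleteSpace Y] (K : X →L[ℝ] Y)
  {σ : ℝ} {v : X} {u : Y}

theorem inner_adjoint_eq_of_apply_eq (h : K v = σ • u) (z : Y) :
    ⟪v, ContinuousLinearMap.adjoint K z⟫_ℝ = σ * ⟪u, z⟫_ℝ := by
  rw [ContinuousLinearMap.adjoint_inner_right, h, real_inner_smul_left]

theorem inner_apply_eq_of_adjoint_apply_eq (h : ContinuousLinearMap.adjoint K u = σ • v) (x : X) :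
    ⟪K x, u⟫_ℝ = σ * ⟪x, v⟫_ℝ := by
  rw [← ContinuousLinearMap.adjoint_inner_right, h, real_inner_smul_right]

end SingularSystem

theorem l1SVD_rate_one_third_general {X Y : Type*}
    [NormedAddCommGroup X] [InnerProductSpace ℝ X] [CompleteSpace X]
    [NormedAddCommGroup Y] [InnerProductSpace ℝ Y] [CompleteSpace Y]
    (K : X →L[ℝ] Y)
    (σ : ℕ → ℝ) (v : ℕ → X) (u : ℕ → Y)
    (hσ : ∀ n, 0 < σ n) (hv : Orthonormal ℝ v) (hu : Orthonormal ℝ u)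
    (hKv : ∀ n, K (v n) = σ n • u n)
    (hKadj : ∀ n, (ContinuousLinearMap.adjoint K) (u n) = σ n • v n)
    (hvspan : (Submodule.span ℝ (Set.range v)).topologicalClosure
      = (LinearMap.range ((ContinuousLinearMap.adjoint K : Y →L[ℝ] X) : Y →ₗ[ℝ] X)).topologicalClosure)
    (δ E c d₁ d₂ : ℝ) (hδ : 0 < δ) (hE : 0 < E) (hc : 0 < c) (hd₁ : 0 < d₁)
    (α : ℝ) (hαdef : α = c * (δ / E) ^ ((2 : ℝ) / 3))
    (z : Y) (hz : ‖z‖ ≤ E) (x : X) (hx : x = ContinuousLinearMap.adjoint K z)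
    (yδ : Y) (hyδ : ‖yδ - K x‖ ≤ δ)
    (hd₁σ : ∀ n, (α / 2 < |σ n * ⟪yδ, u n⟫_ℝ| ∨ α / 2 < |σ n * ⟪K x, u n⟫_ℝ|)
      → 1 ≤ d₁ / α * σ n)
    (hd₂σ : ∀ n, σ n ≤ Real.sqrt (d₂ * α)) :
    ‖(∑' n, ((σ n ^ 2)⁻¹ * softThresh α (σ n * ⟪yδ, u n⟫_ℝ)) • v n) - x‖
      ≤ (d₁ / c + Real.sqrt (d₂ * c)) * δ ^ ((1 : ℝ) / 3) * E ^ ((2 : ℝ) / 3) := by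
  have hα : 0 < α := hαdef ▸ by positivity
  have hxv (n : ℕ) : ⟪v n, x⟫_ℝ = σ n * ⟪u n, z⟫_ℝ := hx ▸ inner_adjoint_eq_of_apply_eq K (hKv n) z
  have hKxu (n : ℕ) : ⟪K x, u n⟫_ℝ = σ n ^ 2 * ⟪u n, z⟫_ℝ := by
    rw [inner_apply_eq_of_adjoint_apply_eq K (hKadj n), real_inner_comm, hxv, sq, mul_assoc]
  set p : ℕ → ℝ := fun n =>
    (σ n ^ 2)⁻¹ * (softThresh α (σ n * ⟪yδ, u n⟫_ℝ) - softThresh α (σ n * ⟪K x, u n⟫_ℝ))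
  set q : ℕ → ℝ := fun n =>
    (σ n ^ 2)⁻¹ * (softThresh α (σ n * ⟪K x, u n⟫_ℝ) - σ n * ⟪K x, u n⟫_ℝ)
  have hp (n : ℕ) : |p n| ≤ d₁ / α * |⟪u n, yδ - K x⟫_ℝ| := by
    rw [real_inner_comm, inner_sub_left]
    exact abs_inv_sq_mul_softThresh_sub_softThresh_le hα.le (hσ n) (by positivity) (hd₁σ n)
  have hq (n : ℕ) : |q n| ≤ √(d₂ * α) * |⟪u n, z⟫_ℝ| := by
    simpa only [q, hKxu] using abs_inv_sq_mul_softThresh_sub_self_le hα.le (hσ n) (hd₂σ n) _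
  have hcoeff (n : ℕ) :
      ⟪v n, x⟫_ℝ + (p n + q n) = (σ n ^ 2)⁻¹ * softThresh α (σ n * ⟪yδ, u n⟫_ℝ) := by
    simp only [p, q, hKxu, hxv]
    field_simp [(hσ n).ne']
    ring
  have hx_mem : x ∈ (Submodule.span ℝ (Set.range v)).topologicalClosure :=
    hvspan ▸ Submodule.le_topologicalClosure _ ⟨z, hx.symm⟩
  have hsum := (hv.hasSum_inner_smul_of_mem_closure_span hx_mem).add <|
    (hv.summable_smul_of_abs_le_inner hu hp).hasSum.add
      (hv.summable_smul_of_abs_le_inner hu hq).hasSum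
  simp only [← add_smul, hcoeff] at hsum
  rw [hsum.tsum_eq, add_sub_cancel_left, ← div_mul_add_sqrt_mul_mul_eq hδ hE, ← hαdef]
  calc _ ≤ ‖∑' n, p n • v n‖ + ‖∑' n, q n • v n‖ := norm_add_le _ _
    _ ≤ d₁ / α * δ + √(d₂ * α) * E := by
      gcongr
      · exact (hv.norm_tsum_smul_le_of_abs_le_inner hu (by positivity) hp).trans (by gcongr)
      · exact (hv.norm_tsum_smul_le_of_abs_le_inner hu (by positivity) hq).trans (by gcongr)

/-- Error estimate for the `ℓ¹`-SVD method with the a priori choice `α = c (δ/E)^{2/3}`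
under the source condition `x = K* z`, `‖z‖ ≤ E`:
`‖x^{α,δ} − x‖ ≤ (d₁/c + √(d₂ c)) δ^{1/3} E^{2/3}`. -/
theorem l1SVD_rate_one_third {X Y : Type*}
    [NormedAddCommGroup X] [InnerProductSpace ℝ X] [CompleteSpace X]
    [NormedAddCommGroup Y] [InnerProductSpace ℝ Y] [CompleteSpace Y]
    (K : X →L[ℝ] Y) (hK : IsCompactOperator K)
    (σ : ℕ → ℝ) (v : ℕ → X) (u : ℕ → Y)
    (hσ : ∀ n, 0 < σ n) (hv : Orthonormal ℝ v) (hu : Orthonormal ℝ u)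
    (hKv : ∀ n, K (v n) = σ n • u n)
    (hKadj : ∀ n, (ContinuousLinearMap.adjoint K) (u n) = σ n • v n)
    (huspan : (Submodule.span ℝ (Set.range u)).topologicalClosure
      = (LinearMap.range (K : X →ₗ[ℝ] Y)).topologicalClosure)
    (hvspan : (Submodule.span ℝ (Set.range v)).topologicalClosure
      = (LinearMap.range ((ContinuousLinearMap.adjoint K : Y →L[ℝ] X) : Y →ₗ[ℝ] X)).topologicalClosure)
    (δ E c d₁ d₂ : ℝ) (hδ : 0 < δ) (hE : 0 < E) (hc : 0 < c) (hd₁ : 0 < d₁) (hd₂ : 0 < d₂)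
    (α : ℝ) (hαdef : α = c * (δ / E) ^ ((2 : ℝ) / 3))
    (z : Y) (hz : ‖z‖ ≤ E) (x : X) (hx : x = ContinuousLinearMap.adjoint K z)
    (yδ : Y) (hyδ : ‖yδ - K x‖ ≤ δ)
    (hd₁σ : ∀ n, (α / 2 < |σ n * ⟪yδ, u n⟫_ℝ| ∨ α / 2 < |σ n * ⟪K x, u n⟫_ℝ|)
      → 1 ≤ d₁ / α * σ n)
    (hd₂σ : ∀ n, σ n ≤ Real.sqrt (d₂ * α)) :
    ‖(∑' n, ((σ n ^ 2)⁻¹ * softThresh α (σ n * ⟪yδ, u n⟫_ℝ)) • v n) - x‖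
      ≤ (d₁ / c + Real.sqrt (d₂ * c)) * δ ^ ((1 : ℝ) / 3) * E ^ ((2 : ℝ) / 3) :=
  l1SVD_rate_one_third_general K σ v u hσ hv hu hKv hKadj hvspan δ E c d₁ d₂ hδ hE hc hd₁ α hαdef z
    hz x hx yδ hyδ hd₁σ hd₂σ
end

section
/- Let K : X → Y be a compact linear operator with singular system {(σ_n, v_n, u_n)}_{n∈ℕ}, where (u_n) spans the closure of the range of K and (v_n) spans the closure of the range of K*. The equation K x = y has a solution x ∈ X if and only if y is orthogonal to the kernel of K* and ∑_n σ_n^{−2} |⟨y, u_n⟩|² < ∞; in this case the element x = ∑_n (⟨y, u_n⟩ / σ_n) v_n (the series converging in X) satisfies K x = y. -/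
open scoped InnerProductSpace

/-!
The coefficients `⟪y, u n⟫ / σ n` are square summable, so `x = ∑ (⟪y, u n⟫ / σ n) • v n`
converges and `⟪v n, x⟫ = ⟪y, u n⟫ / σ n`. As `K* u n = σ n • v n`, this gives
`⟪u n, K x⟫ = σ n ⟪v n, x⟫ = ⟪u n, y⟫`: so `y - K x` is orthogonal to every `u n`, hence to the
closure of the range of `K`, i.e. it lies in `ker K*`. It also lies in `(ker K*)ᗮ`, which contains
`y` and the range of `K`, so it vanishes. Conversely, `⟪K x, u n⟫ = σ n ⟪v n, x⟫` turns Bessel's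
inequality for `(v n)` into the summability condition.
-/

section Orthonormal

variable {ι 𝕜 E : Type*} [RCLike 𝕜] [NormedAddCommGroup E] [InnerProductSpace 𝕜 E]

theorem Submodule.mem_orthogonal_span_range_iff {u : ι → E} {z : E} :
    z ∈ (span 𝕜 (Set.range u))ᗮ ↔ ∀ i, ⟪u i, z⟫_𝕜 = 0 := by
  refine ⟨fun h i => inner_right_of_mem_orthogonal (subset_span (Set.mem_range_self i)) h,
    fun h w hw => ?_⟩
  have hle : span 𝕜 (Set.range u) ≤ (𝕜 ∙ z)ᗮ :=
    span_le.2 <| Set.range_subset_iff.2 fun i => mem_orthogonal_singleton_iff_inner_left.2 (h i)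
  exact mem_orthogonal_singleton_iff_inner_left.1 (hle hw)

theorem Orthonormal.inner_eq_of_hasSum {v : ι → E} (hv : Orthonormal 𝕜 v) {a : ι → 𝕜} {x : E}
    (hx : HasSum (fun i => a i • v i) x) (n : ι) : ⟪v n, x⟫_𝕜 = a n := by
  classical
  have h := hx.mapL (innerSL 𝕜 (v n))
  simp only [innerSL_apply_apply, inner_smul_right, orthonormal_iff_ite.1 hv, mul_ite, mul_one,
    mul_zero] at h
  rw [h.unique (hasSum_single n fun i hi => if_neg (Ne.symm hi)), if_pos rfl]

theorem Orthonormal.exists_hasSum_smul [CompleteSpace E] {v : ι → E} (hv : Orthonormal 𝕜 v)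
    {a : ι → 𝕜} (ha : Summable fun i => ‖a i‖ ^ 2) : ∃ x, HasSum (fun i => a i • v i) x :=
  ⟨_, ((hv.orthogonalFamily.summable_iff_norm_sq_summable a).2 ha).hasSum⟩

end Orthonormal

namespace ContinuousLinearMap

variable {X Y : Type*} [NormedAddCommGroup X] [InnerProductSpace ℝ X] [CompleteSpace X]
  [NormedAddCommGroup Y] [InnerProductSpace ℝ Y] [CompleteSpace Y] (K : X →L[ℝ] Y)

theorem apply_mem_orthogonal_ker_adjoint (x : X) :
    K x ∈ (LinearMap.ker (adjoint K : Y →ₗ[ℝ] X))ᗮ := by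
  rw [← K.orthogonal_range]
  exact Submodule.le_orthogonal_orthogonal _ ⟨x, rfl⟩

theorem ker_adjoint_eq_orthogonal_span {ι : Type*} {u : ι → Y}
    (hu : (Submodule.span ℝ (Set.range u)).topologicalClosure
      = (LinearMap.range (K : X →ₗ[ℝ] Y)).topologicalClosure) :
    LinearMap.ker (adjoint K : Y →ₗ[ℝ] X) = (Submodule.span ℝ (Set.range u))ᗮ := by
  rw [← K.orthogonal_range, ← Submodule.orthogonal_closure (Submodule.span ℝ (Set.range u)), hu,
    Submodule.orthogonal_closure]

theorem inner_apply_of_adjoint_eq_smul {u : Y} {v : X} {σ : ℝ} (h : adjoint K u = σ • v)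
    (x : X) : ⟪u, K x⟫_ℝ = σ * ⟪v, x⟫_ℝ := by
  rw [← adjoint_inner_left, h, real_inner_smul_left]

variable {ι : Type*} {σ : ι → ℝ} {v : ι → X} {u : ι → Y}

theorem summable_inv_sq_mul_sq_inner_apply (hσ : ∀ n, σ n ≠ 0) (hv : Orthonormal ℝ v)
    (hKadj : ∀ n, adjoint K (u n) = σ n • v n) (x : X) :
    Summable fun n => (σ n ^ 2)⁻¹ * |⟪K x, u n⟫_ℝ| ^ 2 :=
  (hv.inner_products_summable x).congr fun n => by
    rw [← real_inner_comm (K x), K.inner_apply_of_adjoint_eq_smul (hKadj n), abs_mul, mul_pow,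
      sq_abs (σ n), inv_mul_cancel_left₀ (pow_ne_zero 2 (hσ n)), Real.norm_eq_abs, real_inner_comm]

theorem exists_hasSum_picard_series (hσ : ∀ n, σ n ≠ 0) (hv : Orthonormal ℝ v)
    (hKadj : ∀ n, adjoint K (u n) = σ n • v n)
    (hu : (Submodule.span ℝ (Set.range u)).topologicalClosure
      = (LinearMap.range (K : X →ₗ[ℝ] Y)).topologicalClosure)
    {y : Y} (hy : y ∈ (LinearMap.ker (adjoint K : Y →ₗ[ℝ] X))ᗮ)
    (hsum : Summable fun n => (σ n ^ 2)⁻¹ * |⟪y, u n⟫_ℝ| ^ 2) :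
    ∃ x, HasSum (fun n => (⟪y, u n⟫_ℝ / σ n) • v n) x ∧ K x = y := by
  have hsq : Summable fun n => ‖⟪y, u n⟫_ℝ / σ n‖ ^ 2 := hsum.congr fun n => by
    rw [Real.norm_eq_abs, sq_abs, sq_abs, div_pow, div_eq_inv_mul]
  obtain ⟨x, hx⟩ := hv.exists_hasSum_smul hsq
  refine ⟨x, hx, ?_⟩
  have hperp : y - K x ∈ (Submodule.span ℝ (Set.range u))ᗮ :=
    Submodule.mem_orthogonal_span_range_iff.2 fun n => by
      rw [inner_sub_right, K.inner_apply_of_adjoint_eq_smul (hKadj n), hv.inner_eq_of_hasSum hx n,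
        mul_div_cancel₀ _ (hσ n), real_inner_comm, sub_self]
  have hker : y - K x ∈ LinearMap.ker (adjoint K : Y →ₗ[ℝ] X) :=
    K.ker_adjoint_eq_orthogonal_span hu ▸ hperp
  have hker_perp : y - K x ∈ (LinearMap.ker (adjoint K : Y →ₗ[ℝ] X))ᗮ :=
    sub_mem hy (K.apply_mem_orthogonal_ker_adjoint x)
  exact (sub_eq_zero.1 (Submodule.disjoint_def.1 (Submodule.orthogonal_disjoint _) _ hker
    hker_perp)).symm

end ContinuousLinearMap

theorem picard_criterion_general {X Y : Type*}
    [NormedAddCommGroup X] [InnerProductSpace ℝ X] [CompleteSpace X]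
    [NormedAddCommGroup Y] [InnerProductSpace ℝ Y] [CompleteSpace Y]
    (K : X →L[ℝ] Y)
    (σ : ℕ → ℝ) (v : ℕ → X) (u : ℕ → Y)
    (hσ : ∀ n, 0 < σ n) (hv : Orthonormal ℝ v)
    (hKadj : ∀ n, (ContinuousLinearMap.adjoint K) (u n) = σ n • v n)
    (huspan : (Submodule.span ℝ (Set.range u)).topologicalClosure
      = (LinearMap.range (K : X →ₗ[ℝ] Y)).topologicalClosure)
    (y : Y) :
    ((∃ x : X, K x = y) ↔
      (y ∈ (LinearMap.ker (ContinuousLinearMap.adjoint K : Y →ₗ[ℝ] X))ᗮ ∧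
        Summable fun n => (σ n ^ 2)⁻¹ * |⟪y, u n⟫_ℝ| ^ 2)) ∧
    ((y ∈ (LinearMap.ker (ContinuousLinearMap.adjoint K : Y →ₗ[ℝ] X))ᗮ ∧
        Summable fun n => (σ n ^ 2)⁻¹ * |⟪y, u n⟫_ℝ| ^ 2) →
      ∃ x : X, HasSum (fun n => (⟪y, u n⟫_ℝ / σ n) • v n) x ∧ K x = y) := by
  have hσ₀ : ∀ n, σ n ≠ 0 := fun n => (hσ n).ne'
  refine ⟨⟨?_, fun h => ?_⟩, fun h => K.exists_hasSum_picard_series hσ₀ hv hKadj huspan h.1 h.2⟩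
  · rintro ⟨x, rfl⟩
    exact ⟨K.apply_mem_orthogonal_ker_adjoint x, K.summable_inv_sq_mul_sq_inner_apply hσ₀ hv hKadj x⟩
  · obtain ⟨x, -, hx⟩ := K.exists_hasSum_picard_series hσ₀ hv hKadj huspan h.1 h.2
    exact ⟨x, hx⟩

/-- Picard criterion: `K x = y` is solvable iff `y ⊥ ker K*` and
`∑ σ_n^{-2} |⟨y, u_n⟩|² < ∞`; in this case `x = ∑ (⟨y, u_n⟩/σ_n) v_n` solves `K x = y`. -/
theorem picard_criterion {X Y : Type*}
    [NormedAddCommGroup X] [InnerProductSpace ℝ X] [CompleteSpace X]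
    [NormedAddCommGroup Y] [InnerProductSpace ℝ Y] [CompleteSpace Y]
    (K : X →L[ℝ] Y) (hK : IsCompactOperator K)
    (σ : ℕ → ℝ) (v : ℕ → X) (u : ℕ → Y)
    (hσ : ∀ n, 0 < σ n) (hv : Orthonormal ℝ v) (hu : Orthonormal ℝ u)
    (hKv : ∀ n, K (v n) = σ n • u n)
    (hKadj : ∀ n, (ContinuousLinearMap.adjoint K) (u n) = σ n • v n)
    (huspan : (Submodule.span ℝ (Set.range u)).topologicalClosure
      = (LinearMap.range (K : X →ₗ[ℝ] Y)).topologicalClosure)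
    (hvspan : (Submodule.span ℝ (Set.range v)).topologicalClosure
      = (LinearMap.range (ContinuousLinearMap.adjoint K : Y →ₗ[ℝ] X)).topologicalClosure)
    (y : Y) :
    ((∃ x : X, K x = y) ↔
      (y ∈ (LinearMap.ker (ContinuousLinearMap.adjoint K : Y →ₗ[ℝ] X))ᗮ ∧
        Summable fun n => (σ n ^ 2)⁻¹ * |⟪y, u n⟫_ℝ| ^ 2)) ∧
    ((y ∈ (LinearMap.ker (ContinuousLinearMap.adjoint K : Y →ₗ[ℝ] X))ᗮ ∧
        Summable fun n => (σ n ^ 2)⁻¹ * |⟪y, u n⟫_ℝ| ^ 2) →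
      ∃ x : X, HasSum (fun n => (⟪y, u n⟫_ℝ / σ n) • v n) x ∧ K x = y) :=
  picard_criterion_general K σ v u hσ hv hKadj huspan y
end
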